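/- Let (Ω, 𝓕, P) be a probability space and H ≥ 1. Let λ_1, …, λ_H be mutually independent real random variables with E[λ_h] = ψ and E[λ_h²] = ψ(ψ+1) for all h (the first two moments of a Gamma(ψ, 1) distribution), and let X_1, …, X_H be square-integrable real random variables such that (λ_1, …, λ_H) is independent of (X_1, …, X_H). Assume the X_h are identically distributed with variance V := Var(X_1), and that Cov(X_h, X_k) = c_A for all h ≠ k. Then Var(Σ_{h=1}^H λ_h X_h) = (V·H + c_A·H·(H−1))·ψ² + E[X_1²]·H·ψ. (This is the variance formula derived in the paper's appendix for the case of Gamma(ψ, 1)-distributed scores.) -/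

import Mathlib

open MeasureTheory ProbabilityTheory

/-- Covariance of two real-valued random variables: `Cov(X, Y) = E[XY] - E[X]·E[Y]`. -/
noncomputable def cov {Ω : Type*} [MeasurableSpace Ω] (P : Measure Ω) (X Y : Ω → ℝ) : ℝ :=
  (∫ ω, X ω * Y ω ∂P) - (∫ ω, X ω ∂P) * (∫ ω, Y ω ∂P)

lemma integrable_mul_of_memL2 {Ω : Type*} [MeasurableSpace Ω] {P : Measure Ω}
    {f g : Ω → ℝ} (hf : MemLp f 2 P) (hg : MemLp g 2 P) :
    Integrable (fun ω => f ω * g ω) P := by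
  have h : MemLp (f • g) 1 P := by
    apply hg.smul hf
  rw [← memLp_one_iff_integrable]
  exact h

/-- Variance formula for Gamma(ψ,1)-type scores: if the scores λ_1, …, λ_H are mutually
independent with first two moments ψ and ψ(ψ+1), and independent of the masses X_1, …, X_H,
then `Var(Σ λ_h X_h) = (V·H + c_A·H·(H−1))·ψ² + E[X_1²]·H·ψ`. -/
theorem variance_sum_gamma_scores
    {Ω : Type*} [MeasurableSpace Ω] (P : Measure Ω) [IsProbabilityMeasure P]
    (H : ℕ) (hH : 1 ≤ H)
    (lam X : Fin H → Ω → ℝ)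
    (hlam : ∀ h, MemLp (lam h) 2 P)
    (hX : ∀ h, MemLp (X h) 2 P)
    -- the scores λ_1, …, λ_H are mutually independent
    (hlamIndep : iIndepFun lam P)
    -- first two moments of a Gamma(ψ, 1) distribution
    (ψ : ℝ)
    (hmean : ∀ h, (∫ ω, lam h ω ∂P) = ψ)
    (hsecond : ∀ h, (∫ ω, (lam h ω) ^ 2 ∂P) = ψ * (ψ + 1))
    -- the scores are independent of the masses
    (hindep : IndepFun
      (fun ω => ((fun h => lam h ω) : Fin H → ℝ))
      (fun ω => ((fun h => X h ω) : Fin H → ℝ)) P)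
    -- the masses are identically distributed
    (hid : ∀ h, IdentDistrib (X h) (X ⟨0, hH⟩) P P)
    (V cA : ℝ)
    (hV : cov P (X ⟨0, hH⟩) (X ⟨0, hH⟩) = V)
    (hcA : ∀ h k, h ≠ k → cov P (X h) (X k) = cA) :
    cov P (fun ω => ∑ h, lam h ω * X h ω) (fun ω => ∑ h, lam h ω * X h ω) =
      (V * H + cA * H * (H - 1)) * ψ ^ 2 + (∫ ω, (X ⟨0, hH⟩ ω) ^ 2 ∂P) * H * ψ := by
  set h0 : Fin H := ⟨0, hH⟩ with hh0
  set m : ℝ := ∫ ω, X h0 ω ∂P with hm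
  set S : ℝ := ∫ ω, (X h0 ω) ^ 2 ∂P with hS
  -- basic measurability
  have haeL : ∀ h, AEStronglyMeasurable (lam h) P := fun h => (hlam h).1
  have haeX : ∀ h, AEStronglyMeasurable (X h) P := fun h => (hX h).1
  -- masses have common mean and second moment
  have hmX : ∀ h, (∫ ω, X h ω ∂P) = m := fun h => (hid h).integral_eq
  have hsX : ∀ h, (∫ ω, (X h ω) ^ 2 ∂P) = S := by
    intro h
    have := ((hid h).comp (measurable_id.pow_const 2)).integral_eq
    simpa using this
  -- independence of pairwise products of scores and masses
  have hIhk : ∀ h k : Fin H, IndepFun (fun ω => lam h ω * lam k ω)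
      (fun ω => X h ω * X k ω) P := fun h k =>
    hindep.comp ((measurable_pi_apply h).mul (measurable_pi_apply k))
      ((measurable_pi_apply h).mul (measurable_pi_apply k))
  have hIh : ∀ h : Fin H, IndepFun (lam h) (X h) P := fun h =>
    hindep.comp (measurable_pi_apply h) (measurable_pi_apply h)
  -- integrability of products
  have hIntLL : ∀ h k : Fin H, Integrable (fun ω => lam h ω * lam k ω) P :=
    fun h k => integrable_mul_of_memL2 (hlam h) (hlam k)
  have hIntXX : ∀ h k : Fin H, Integrable (fun ω => X h ω * X k ω) P :=
    fun h k => integrable_mul_of_memL2 (hX h) (hX k)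
  have hInt4 : ∀ h k : Fin H,
      Integrable (fun ω => (lam h ω * lam k ω) * (X h ω * X k ω)) P :=
    fun h k => (hIhk h k).integrable_mul (hIntLL h k) (hIntXX h k)
  have hIntLX : ∀ h : Fin H, Integrable (fun ω => lam h ω * X h ω) P :=
    fun h => (hIh h).integrable_mul ((hlam h).integrable one_le_two)
      ((hX h).integrable one_le_two)
  -- expectations of products of two scores
  have hELL : ∀ h k : Fin H,
      (∫ ω, lam h ω * lam k ω ∂P) = if h = k then ψ * (ψ + 1) else ψ ^ 2 := by
    intro h k
    by_cases hhk : h = k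
    · subst hhk
      simp only [if_pos rfl]
      rw [← hsecond h]
      congr 1
      ext ω
      ring
    · rw [if_neg hhk]
      rw [show (∫ ω, lam h ω * lam k ω ∂P) = _ from
        (hlamIndep.indepFun hhk).integral_mul_eq_mul_integral (haeL h) (haeL k), hmean, hmean]
      ring
  -- expectations of products of two masses
  have hEXX : ∀ h k : Fin H,
      (∫ ω, X h ω * X k ω ∂P) = if h = k then S else cA + m * m := by
    intro h k
    by_cases hhk : h = k
    · subst hhk
      rw [if_pos rfl, ← hsX h]
      congr 1
      ext ω
      ring
    · rw [if_neg hhk]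
      have := hcA h k hhk
      rw [cov] at this
      rw [hmX, hmX] at this
      linarith
  -- expectation of each term in the double sum
  have hterm : ∀ h k : Fin H,
      (∫ ω, (lam h ω * lam k ω) * (X h ω * X k ω) ∂P) =
        if h = k then ψ * (ψ + 1) * S else ψ ^ 2 * (cA + m * m) := by
    intro h k
    rw [show (∫ ω, (lam h ω * lam k ω) * (X h ω * X k ω) ∂P) = _ from
        (hIhk h k).integral_mul_eq_mul_integral ((haeL h).mul (haeL k)) ((haeX h).mul (haeX k)),
      hELL, hEXX]
    by_cases hhk : h = k <;> simp [hhk]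
  -- expectation of the sum
  have hEsum : (∫ ω, ∑ h, lam h ω * X h ω ∂P) = H * (ψ * m) := by
    rw [integral_finset_sum _ (fun h _ => hIntLX h)]
    have : ∀ h : Fin H, (∫ ω, lam h ω * X h ω ∂P) = ψ * m := by
      intro h
      rw [show (∫ ω, lam h ω * X h ω ∂P) = _ from
        (hIh h).integral_mul_eq_mul_integral (haeL h) (haeX h), hmean, hmX]
    rw [Finset.sum_congr rfl (fun h _ => this h), Finset.sum_const, Finset.card_univ,
      Fintype.card_fin, nsmul_eq_mul]
  -- expectation of the square of the sum
  have hEsq : (∫ ω, (∑ h, lam h ω * X h ω) * (∑ k, lam k ω * X k ω) ∂P) =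
      H * (ψ * (ψ + 1) * S) + H * (H - 1) * (ψ ^ 2 * (cA + m * m)) := by
    have expand : ∀ ω, (∑ h, lam h ω * X h ω) * (∑ k, lam k ω * X k ω) =
        ∑ h, ∑ k, (lam h ω * lam k ω) * (X h ω * X k ω) := by
      intro ω
      rw [Finset.sum_mul_sum]
      exact Finset.sum_congr rfl fun h _ => Finset.sum_congr rfl fun k _ => by ring
    simp_rw [expand]
    rw [integral_finset_sum _ (fun h _ => integrable_finset_sum _ (fun k _ => hInt4 h k))]
    have hinner : ∀ h : Fin H,
        (∫ ω, ∑ k, (lam h ω * lam k ω) * (X h ω * X k ω) ∂P) =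
          ψ * (ψ + 1) * S + (H - 1) * (ψ ^ 2 * (cA + m * m)) := by
      intro h
      rw [integral_finset_sum _ (fun k _ => hInt4 h k)]
      rw [Finset.sum_congr rfl (fun k _ => hterm h k)]
      have : ∀ k : Fin H, (if h = k then ψ * (ψ + 1) * S else ψ ^ 2 * (cA + m * m)) =
          ψ ^ 2 * (cA + m * m) +
            (if h = k then ψ * (ψ + 1) * S - ψ ^ 2 * (cA + m * m) else 0) := by
        intro k
        by_cases hhk : h = k <;> simp [hhk]
      rw [Finset.sum_congr rfl (fun k _ => this k), Finset.sum_add_distrib,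
        Finset.sum_ite_eq _ h, if_pos (Finset.mem_univ h), Finset.sum_const,
        Finset.card_univ, Fintype.card_fin, nsmul_eq_mul]
      ring
    rw [Finset.sum_congr rfl (fun h _ => hinner h), Finset.sum_const, Finset.card_univ,
      Fintype.card_fin, nsmul_eq_mul]
    ring
  -- the variance V in terms of moments
  have hXX0 : (∫ ω, X h0 ω * X h0 ω ∂P) = S := by
    rw [hS]
    exact integral_congr_ae (Filter.Eventually.of_forall fun ω => by ring)
  have hV' : V = S - m * m := by
    rw [← hV]
    simp only [cov]
    rw [hXX0, ← hm]
  rw [cov, hEsq, hEsum, hV']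
  ring
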